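/- arXiv:1708.07849 — 2 statements merged into one kernel-verified Lean document; each statement's English description precedes it below -/
import Mathlib

section
/- Let f : ℝ^{2×n} → ℝ be rank-one convex with f(0) = 0. Suppose u₁, …, u_{n−1} : ℝⁿ → ℝ are finite linear combinations u_i = Σ_{ε : ε_n = 0} Σ_{j=J}^{K} Σ_{k ∈ ℤⁿ} a^{(ε)}_{j,k,i} h^{(ε)}_{j,k} of Haar functions with ε_n = 0, and v_n : ℝⁿ → ℝ is a finite linear combination v_n = Σ_{j=J}^{K} Σ_{k ∈ ℤⁿ} b_{j,k} h^{(e_n)}_{j,k} of Haar functions with ε = e_n, where the coefficients a^{(ε)}_{j,k,i} and b_{j,k} vanish whenever |k| is sufficiently large (so only finitely many are nonzero). Then ∫_{ℝⁿ} f(M(x)) dx ≥ 0, where M(x) is the 2×n matrix with first row (u₁(x), …, u_{n−1}(x), 0) and second row (0, …, 0, v_n(x)). -/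
open MeasureTheory

noncomputable section

instance matrixMeasurableSpace {m n : ℕ} : MeasurableSpace (Matrix (Fin m) (Fin n) ℝ) :=
  show MeasurableSpace (Fin m → Fin n → ℝ) from inferInstance

/-- The Jacobian matrix of `φ : ℝⁿ → ℝᵐ` at `x`. -/
def jacobianM (m n : ℕ) (φ : (Fin n → ℝ) → (Fin m → ℝ)) (x : Fin n → ℝ) :
    Matrix (Fin m) (Fin n) ℝ :=
  Matrix.of fun i j => fderiv ℝ φ x (Pi.single j 1) i

/-- `f : ℝ^{m×n} → ℝ` is quasiconvex: `f` is Borel measurable, locally bounded, and for every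
nonempty bounded open `Ω ⊆ ℝⁿ`, every `X₀` and every smooth `φ` compactly supported in `Ω`,
`f X₀ * |Ω| ≤ ∫_Ω f (X₀ + Dφ x) dx`. -/
def IsQuasiconvex {m n : ℕ} (f : Matrix (Fin m) (Fin n) ℝ → ℝ) : Prop :=
  Measurable f ∧
  (∀ K : Set (Matrix (Fin m) (Fin n) ℝ), IsCompact K → ∃ C : ℝ, ∀ X ∈ K, |f X| ≤ C) ∧
  ∀ Ω : Set (Fin n → ℝ), IsOpen Ω → Ω.Nonempty → Bornology.IsBounded Ω →
    ∀ (X₀ : Matrix (Fin m) (Fin n) ℝ) (φ : (Fin n → ℝ) → (Fin m → ℝ)),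
      ContDiff ℝ (⊤ : ℕ∞) φ → HasCompactSupport φ → tsupport φ ⊆ Ω →
      f X₀ * (volume Ω).toReal ≤ ∫ x in Ω, f (X₀ + jacobianM m n φ x)

/-- `f : ℝ^{m×n} → ℝ` is rank-one convex. -/
def IsRankOneConvex {m n : ℕ} (f : Matrix (Fin m) (Fin n) ℝ → ℝ) : Prop :=
  ∀ X Y : Matrix (Fin m) (Fin n) ℝ, (X - Y).rank ≤ 1 →
    ∀ t : ℝ, t ∈ Set.Icc (0 : ℝ) 1 →
      f (t • X + (1 - t) • Y) ≤ t * f X + (1 - t) * f Y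

/-- The barycentre `μ̄ = ∫ X dμ(X)`, computed entrywise. -/
def matBarycenter {m n : ℕ} (μ : Measure (Matrix (Fin m) (Fin n) ℝ)) :
    Matrix (Fin m) (Fin n) ℝ :=
  Matrix.of fun i j => ∫ X, X i j ∂μ

/-- `M^{2×n}_tri`: second row is `(0, …, 0, a)`. -/
def Mtri (n : ℕ) : Set (Matrix (Fin 2) (Fin n) ℝ) :=
  {X | ∀ j : Fin n, (j : ℕ) + 1 < n → X 1 j = 0}

/-- `M^{2×n}_diag`: first row `(a₁, …, a_{n-1}, 0)`, second row `(0, …, 0, b)`. -/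
def Mdiag (n : ℕ) : Set (Matrix (Fin 2) (Fin n) ℝ) :=
  {X | (∀ j : Fin n, (j : ℕ) + 1 < n → X 1 j = 0) ∧
       (∀ j : Fin n, (j : ℕ) + 1 = n → X 0 j = 0)}

/-- The orthogonal projection of `ℝ^{2×n}` onto `M^{2×n}_diag`. -/
def Pdiag (n : ℕ) (X : Matrix (Fin 2) (Fin n) ℝ) : Matrix (Fin 2) (Fin n) ℝ :=
  Matrix.of fun i j =>
    if i = 0 then (if (j : ℕ) + 1 < n then X 0 j else 0)
    else (if (j : ℕ) + 1 = n then X 1 j else 0)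

/-- A homogeneous gradient Young measure: a compactly supported Borel probability measure
satisfying Jensen's inequality for all quasiconvex functions. -/
def IsHomogeneousGradientYoungMeasure {m n : ℕ}
    (μ : Measure (Matrix (Fin m) (Fin n) ℝ)) : Prop :=
  IsProbabilityMeasure μ ∧ (∃ K, IsCompact K ∧ μ Kᶜ = 0) ∧
  ∀ f : Matrix (Fin m) (Fin n) ℝ → ℝ, IsQuasiconvex f →
    f (matBarycenter μ) ≤ ∫ X, f X ∂μ

/-- A laminate: a compactly supported Borel probability measure
satisfying Jensen's inequality for all rank-one convex functions. -/
def IsLaminate {m n : ℕ} (μ : Measure (Matrix (Fin m) (Fin n) ℝ)) : Prop :=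
  IsProbabilityMeasure μ ∧ (∃ K, IsCompact K ∧ μ Kᶜ = 0) ∧
  ∀ f : Matrix (Fin m) (Fin n) ℝ → ℝ, IsRankOneConvex f →
    f (matBarycenter μ) ≤ ∫ X, f X ∂μ

/-- `M^{2×2}_+ = {X : X₁₂ > 0}`. -/
def Mplus : Set (Matrix (Fin 2) (Fin 2) ℝ) := {X | 0 < X 0 1}

/-- The partial Legendre transform `Ψ`. -/
def Psi (X : Matrix (Fin 2) (Fin 2) ℝ) : Matrix (Fin 2) (Fin 2) ℝ :=
  (X 0 1)⁻¹ • !![-(X 0 0), 1; -X.det, X 1 1]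

/-- The dual function `h̃(X) = X₁₂ · h(Ψ(X))`. -/
def dualFn (h : Matrix (Fin 2) (Fin 2) ℝ → ℝ) (X : Matrix (Fin 2) (Fin 2) ℝ) : ℝ :=
  X 0 1 * h (Psi X)

/-- The dual measure `μ̃`, characterised by
`∫ f dμ̃ = (1/μ̄₁₂) ∫ X₁₂ · f(Ψ(X)) dμ(X)` for all Borel `f : M → [0,∞]`. -/
def dualMeasure (μ : Measure (Matrix (Fin 2) (Fin 2) ℝ)) :
    Measure (Matrix (Fin 2) (Fin 2) ℝ) :=
  Measure.map Psi
    ((ENNReal.ofReal (matBarycenter μ 0 1))⁻¹ •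
      μ.withDensity fun X => ENNReal.ofReal (X 0 1))

/-- The (topological) support of a measure. -/
def mSupport {α : Type*} [TopologicalSpace α] [MeasurableSpace α] (μ : Measure α) : Set α :=
  {x | ∀ U : Set α, IsOpen U → x ∈ U → μ U ≠ 0}

/-- `f` is quasiconvex on the open set `U ⊆ ℝ^{2×2}`. -/
def IsQuasiconvexOn (U : Set (Matrix (Fin 2) (Fin 2) ℝ))
    (f : Matrix (Fin 2) (Fin 2) ℝ → ℝ) : Prop :=
  ∀ Ω : Set (Fin 2 → ℝ), IsOpen Ω → Ω.Nonempty → Bornology.IsBounded Ω →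
    ∀ (A : Matrix (Fin 2) (Fin 2) ℝ) (φ : (Fin 2 → ℝ) → (Fin 2 → ℝ)),
      ContDiff ℝ (⊤ : ℕ∞) φ → HasCompactSupport φ → tsupport φ ⊆ Ω →
      (∀ x, A + jacobianM 2 2 φ x ∈ U) →
      f A * (volume Ω).toReal ≤ ∫ x in Ω, f (A + jacobianM 2 2 φ x)

/-- `f` is rank-one convex on the open convex set `U ⊆ ℝ^{2×2}`. -/
def IsRankOneConvexOn (U : Set (Matrix (Fin 2) (Fin 2) ℝ))
    (f : Matrix (Fin 2) (Fin 2) ℝ → ℝ) : Prop :=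
  ∀ X ∈ U, ∀ Y ∈ U, (X - Y).rank ≤ 1 →
    ∀ t : ℝ, t ∈ Set.Icc (0 : ℝ) 1 →
      f (t • X + (1 - t) • Y) ≤ t * f X + (1 - t) * f Y

/-- The mother Haar function `h_{[0,1)} = χ_{[0,1/2)} − χ_{[1/2,1)}`. -/
def haarMother (x : ℝ) : ℝ :=
  if 0 ≤ x ∧ x < 1 / 2 then 1 else if 1 / 2 ≤ x ∧ x < 1 then -1 else 0

/-- `h_I` for the dyadic interval `I = [k·2^{-j}, (k+1)·2^{-j})`:
`h_I(x) = h_{[0,1)}((x−a)/(b−a))`. -/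
def haar1d (j k : ℤ) (x : ℝ) : ℝ := haarMother (2 ^ j * x - k)

/-- The indicator `χ_I` of the dyadic interval `I = [k·2^{-j}, (k+1)·2^{-j})`. -/
def dyadicIndicator (j k : ℤ) (x : ℝ) : ℝ :=
  if 0 ≤ 2 ^ j * x - (k : ℝ) ∧ 2 ^ j * x - (k : ℝ) < 1 then 1 else 0

/-- The Haar function `h^{(ε)}_{j,k}(x) = Π_l h_{I_l}^{ε_l}(x_l)` on `ℝⁿ`, where the factor
is `h_{I_l}` if `ε_l = 1` and `χ_{I_l}` if `ε_l = 0`. -/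
def haarND (n : ℕ) (ε : Fin n → Bool) (j : ℤ) (k : Fin n → ℤ) (x : Fin n → ℝ) : ℝ :=
  ∏ l : Fin n, if ε l then haar1d j (k l) (x l) else dyadicIndicator j (k l) (x l)

/-!
All Haar functions of levels `J, …, K` are constant on the dyadic cubes of side `2 ^ -(K + 1)`,
so the integral is `2 ^ -((K + 1) n)` times a finite sum over the lattice `ℤⁿ` of these cubes.
Add the Haar terms to the field group by group: level by level, and within a level by the last
coordinate `l` in which `ε` is `1`. Flipping bit `K - j` of the `l`-th lattice coordinate is an
involution of `ℤⁿ` which fixes the terms added earlier and changes the sign of the new ones, so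
the old partial sum at `z` is the midpoint of the new one at `z` and at the flipped point. All new
coefficients lie in one row (the first if `l < n`, the second if `l = n`), so these two values
differ by a matrix of rank at most one, and rank-one convexity shows that the lattice sum of `f`
does not decrease. It starts from `f 0 = 0`.
-/

open Function

theorem IsRankOneConvex.apply_midpoint_le {m n : ℕ} {f : Matrix (Fin m) (Fin n) ℝ → ℝ}
    (hf : IsRankOneConvex f) {X Y : Matrix (Fin m) (Fin n) ℝ} (hXY : (X - Y).rank ≤ 1) :
    f ((2⁻¹ : ℝ) • (X + Y)) ≤ 2⁻¹ * (f X + f Y) := by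
  have h := hf X Y hXY 2⁻¹ ⟨by norm_num, by norm_num⟩
  rw [show (1 - 2⁻¹ : ℝ) = 2⁻¹ by norm_num, ← smul_add] at h
  linarith

theorem IsRankOneConvex.finsum_le_of_midpoint {α : Type*} {m n : ℕ}
    {f : Matrix (Fin m) (Fin n) ℝ → ℝ} (hf : IsRankOneConvex f)
    {g h : α → Matrix (Fin m) (Fin n) ℝ} (σ : Equiv.Perm α)
    (hg : HasFiniteSupport fun z => f (g z)) (hh : HasFiniteSupport fun z => f (h z))
    (hmid : ∀ z, h (σ z) + h z = (2 : ℝ) • g z) (hrank : ∀ z, (h (σ z) - h z).rank ≤ 1) :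
    ∑ᶠ z, f (g z) ≤ ∑ᶠ z, f (h z) := by
  have hhσ : HasFiniteSupport fun z => f (h (σ z)) :=
    HasFiniteSupport.comp_of_injective (f := f ∘ h) σ.injective hh
  have hpoint : ∀ z, f (g z) ≤ 2⁻¹ * (f (h (σ z)) + f (h z)) := fun z => by
    have hgz : g z = (2⁻¹ : ℝ) • (h (σ z) + h z) := by
      rw [hmid, smul_smul]; norm_num
    rw [hgz]
    exact hf.apply_midpoint_le (hrank z)
  calc ∑ᶠ z, f (g z) ≤ ∑ᶠ z, 2⁻¹ * (f (h (σ z)) + f (h z)) :=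
        finsum_le_finsum' hg ((hhσ.add hh).mul_right fun _ => 2⁻¹) hpoint
    _ = 2⁻¹ * ((∑ᶠ z, f (h (σ z))) + ∑ᶠ z, f (h z)) := by
        rw [← mul_finsum, ← finsum_add_distrib hhσ hh]
    _ = ∑ᶠ z, f (h z) := by
        rw [finsum_comp_equiv σ (f := fun z => f (h z))]; ring

def bitFlip (e : ℕ) (t : ℤ) : ℤ := if t / 2 ^ e % 2 = 0 then t + 2 ^ e else t - 2 ^ e

theorem bitFlip_div_two_pow (e : ℕ) (t : ℤ) :
    bitFlip e t / 2 ^ e = if t / 2 ^ e % 2 = 0 then t / 2 ^ e + 1 else t / 2 ^ e - 1 := by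
  have h := fun c : ℤ => Int.add_mul_ediv_right t c (pow_ne_zero e two_ne_zero)
  unfold bitFlip
  split_ifs
  · simpa using h 1
  · simpa [sub_eq_add_neg] using h (-1)

theorem bitFlip_involutive (e : ℕ) : Involutive (bitFlip e) := fun t => by
  have h := bitFlip_div_two_pow e t
  by_cases ht : t / 2 ^ e % 2 = 0
  · rw [if_pos ht] at h
    rw [bitFlip, if_neg (by omega), bitFlip, if_pos ht]
    ring
  · rw [if_neg ht] at h
    rw [bitFlip, if_pos (by omega), bitFlip, if_neg ht]
    ring

theorem bitFlip_div_two_pow_of_lt {e e' : ℕ} (h : e < e') (t : ℤ) :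
    bitFlip e t / 2 ^ e' = t / 2 ^ e' := by
  have hpow : (2 : ℤ) ^ e' = 2 ^ e * 2 * 2 ^ (e' - (e + 1)) := by
    rw [← pow_succ, ← pow_add, Nat.add_sub_cancel' h]
  have hsplit : ∀ s : ℤ, s / 2 ^ e' = s / 2 ^ e / 2 / 2 ^ (e' - (e + 1)) := fun s => by
    rw [Int.ediv_ediv_of_nonneg (by positivity), Int.ediv_ediv_of_nonneg (by positivity), hpow,
      mul_assoc]
  rw [hsplit, hsplit t, bitFlip_div_two_pow]
  split_ifs <;> congr 1 <;> omega

def haarSign (s : ℤ) : ℝ := if s = 0 then 1 else if s = 1 then -1 else 0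

/-- On the lattice `ℤ` of dyadic intervals of length `2 ^ -(K + 1)`, the factor `h_I` (if `b`)
or `χ_I` (if `¬b`) of level `j = K - e`, where `I` is the block of lattice points with
`t / 2 ^ (e + 1) = k`. -/
def latticeFactor (b : Bool) (e : ℕ) (k t : ℤ) : ℝ :=
  if b then haarSign (t / 2 ^ e - 2 * k) else if t / 2 ^ (e + 1) = k then 1 else 0

theorem latticeFactor_bitFlip_of_lt {e e' : ℕ} (h : e < e') (b : Bool) (k t : ℤ) :
    latticeFactor b e' k (bitFlip e t) = latticeFactor b e' k t := by
  simp only [latticeFactor, bitFlip_div_two_pow_of_lt h,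
    bitFlip_div_two_pow_of_lt (h.trans e'.lt_succ_self)]

theorem latticeFactor_false_bitFlip (e : ℕ) (k t : ℤ) :
    latticeFactor false e k (bitFlip e t) = latticeFactor false e k t := by
  simp only [latticeFactor, Bool.false_eq_true, if_false, bitFlip_div_two_pow_of_lt e.lt_succ_self]

theorem latticeFactor_true_bitFlip (e : ℕ) (k t : ℤ) :
    latticeFactor true e k (bitFlip e t) = -latticeFactor true e k t := by
  simp only [latticeFactor, if_true, haarSign, bitFlip_div_two_pow]
  generalize t / 2 ^ e = q
  split_ifs <;> first | omega | norm_num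

theorem div_two_pow_succ_eq_of_latticeFactor_ne_zero {b : Bool} {e : ℕ} {k t : ℤ}
    (h : latticeFactor b e k t ≠ 0) : t / 2 ^ (e + 1) = k := by
  rw [pow_succ, ← Int.ediv_ediv_of_nonneg (by positivity)]
  unfold latticeFactor haarSign at h
  rw [pow_succ, ← Int.ediv_ediv_of_nonneg (by positivity)] at h
  generalize t / 2 ^ e = q at h ⊢
  split_ifs at h <;> first | omega | simp at h

def latticeHaar {n : ℕ} (ε : Fin n → Bool) (e : ℕ) (k z : Fin n → ℤ) : ℝ :=
  ∏ l, latticeFactor (ε l) e (k l) (z l)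

theorem hasFiniteSupport_latticeHaar {n : ℕ} (ε : Fin n → Bool) (e : ℕ) (k : Fin n → ℤ) :
    HasFiniteSupport (latticeHaar ε e k) := by
  have hblock : ∀ l, {t : ℤ | t / 2 ^ (e + 1) = k l}.Finite := fun l =>
    (Set.finite_Ico (k l * 2 ^ (e + 1)) (k l * 2 ^ (e + 1) + 2 ^ (e + 1))).subset fun t ht =>
      (Int.ediv_eq_iff_of_pos (by positivity)).1 ht
  refine (Set.Finite.pi hblock).subset fun z hz l _ => ?_
  exact div_two_pow_succ_eq_of_latticeFactor_ne_zero
    (Finset.prod_ne_zero_iff.1 hz l (Finset.mem_univ l))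

def flipAt {n : ℕ} (L : Fin n) (e : ℕ) (z : Fin n → ℤ) : Fin n → ℤ :=
  update z L (bitFlip e (z L))

theorem flipAt_involutive {n : ℕ} (L : Fin n) (e : ℕ) : Involutive (flipAt L e) := fun z => by
  simp only [flipAt, update_self, update_idem, bitFlip_involutive e (z L), update_eq_self]

theorem latticeHaar_flipAt {n : ℕ} {ε : Fin n → Bool} {e e' : ℕ} {k z : Fin n → ℤ} {L : Fin n}
    {c : ℝ} (h : latticeFactor (ε L) e (k L) (bitFlip e' (z L)) =
      c * latticeFactor (ε L) e (k L) (z L)) :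
    latticeHaar ε e k (flipAt L e' z) = c * latticeHaar ε e k z := by
  unfold latticeHaar
  rw [Fintype.prod_eq_mul_prod_compl L, Fintype.prod_eq_mul_prod_compl L, flipAt, update_self, h,
    mul_assoc]
  congr 2
  refine Finset.prod_congr rfl fun l hl => ?_
  rw [update_of_ne (by simpa using hl)]

theorem latticeHaar_flipAt_of_lt {n : ℕ} {e e' : ℕ} (h : e' < e) (ε : Fin n → Bool)
    (k z : Fin n → ℤ) (L : Fin n) : latticeHaar ε e k (flipAt L e' z) = latticeHaar ε e k z := by
  simpa using latticeHaar_flipAt (c := 1) (by rw [one_mul, latticeFactor_bitFlip_of_lt h])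

theorem latticeHaar_flipAt_of_false {n : ℕ} {ε : Fin n → Bool} {L : Fin n} (hL : ε L = false)
    (e : ℕ) (k z : Fin n → ℤ) : latticeHaar ε e k (flipAt L e z) = latticeHaar ε e k z := by
  simpa using latticeHaar_flipAt (c := 1) (by rw [one_mul, hL, latticeFactor_false_bitFlip])

theorem latticeHaar_flipAt_of_true {n : ℕ} {ε : Fin n → Bool} {L : Fin n} (hL : ε L = true)
    (e : ℕ) (k z : Fin n → ℤ) : latticeHaar ε e k (flipAt L e z) = -latticeHaar ε e k z := by
  simpa using latticeHaar_flipAt (c := -1) (by rw [neg_one_mul, hL, latticeFactor_true_bitFlip])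

theorem haarMother_eq_haarSign (y : ℝ) : haarMother y = haarSign ⌊2 * y⌋ := by
  have h0 : ⌊2 * y⌋ = 0 ↔ 0 ≤ y ∧ y < 1 / 2 := by
    rw [Int.floor_eq_iff]; push_cast; constructor <;> rintro ⟨h₁, h₂⟩ <;> constructor <;> linarith
  have h1 : ⌊2 * y⌋ = 1 ↔ 1 / 2 ≤ y ∧ y < 1 := by
    rw [Int.floor_eq_iff]; push_cast; constructor <;> rintro ⟨h₁, h₂⟩ <;> constructor <;> linarith
  simp only [haarMother, haarSign, h0, h1]

theorem floor_two_zpow_mul_div_two_pow (x : ℝ) {i j : ℤ} (h : i ≤ j) :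
    ⌊(2 : ℝ) ^ j * x⌋ / 2 ^ (j - i).toNat = ⌊(2 : ℝ) ^ i * x⌋ := by
  have hx : (2 : ℝ) ^ i * x = (2 : ℝ) ^ j * x / ((2 ^ (j - i).toNat : ℕ) : ℝ) := by
    rw [Nat.cast_pow, Nat.cast_ofNat, ← zpow_natCast, Int.toNat_of_nonneg (by omega),
      mul_div_right_comm, ← zpow_sub₀ two_ne_zero, sub_sub_cancel]
  rw [hx, Int.floor_div_natCast, Nat.cast_pow, Nat.cast_ofNat]

theorem haar1d_eq_latticeFactor {j K : ℤ} (h : j ≤ K) (k : ℤ) (x : ℝ) :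
    haar1d j k x = latticeFactor true (K - j).toNat k ⌊(2 : ℝ) ^ (K + 1) * x⌋ := by
  rw [latticeFactor, if_pos rfl, show K - j = K + 1 - (j + 1) by ring,
    floor_two_zpow_mul_div_two_pow x (by omega), haar1d, haarMother_eq_haarSign,
    ← Int.floor_sub_intCast, zpow_add_one₀ two_ne_zero]
  push_cast
  ring_nf

theorem dyadicIndicator_eq_latticeFactor {j K : ℤ} (h : j ≤ K) (k : ℤ) (x : ℝ) :
    dyadicIndicator j k x = latticeFactor false (K - j).toNat k ⌊(2 : ℝ) ^ (K + 1) * x⌋ := by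
  have he : (K - j).toNat + 1 = (K + 1 - j).toNat := by omega
  rw [latticeFactor, if_neg Bool.false_ne_true, he, floor_two_zpow_mul_div_two_pow x (by omega),
    dyadicIndicator]
  simp only [Int.floor_eq_iff, sub_nonneg, sub_lt_iff_lt_add']

theorem haarND_eq_latticeHaar {n : ℕ} (ε : Fin n → Bool) {j K : ℤ} (h : j ≤ K)
    (k : Fin n → ℤ) (x : Fin n → ℝ) :
    haarND n ε j k x = latticeHaar ε (K - j).toNat k fun l => ⌊(2 : ℝ) ^ (K + 1) * x l⌋ := by
  refine Finset.prod_congr rfl fun l _ => ?_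
  cases ε l
  · exact dyadicIndicator_eq_latticeFactor h (k l) (x l)
  · exact haar1d_eq_latticeFactor h (k l) (x l)

theorem integral_comp_floor_mul {ι : Type*} [Fintype ι] {c : ℝ} (hc : 0 < c)
    {F : (ι → ℤ) → ℝ} (hF : HasFiniteSupport F) :
    ∫ x : ι → ℝ, F (fun i => ⌊c * x i⌋) = c⁻¹ ^ Fintype.card ι * ∑ᶠ z, F z := by
  classical
  have hF : (support F).Finite := hF
  let cell (z : ι → ℤ) : Set (ι → ℝ) := Set.univ.pi fun i => Set.Ico (z i / c) ((z i + 1) / c)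
  have mem_cell : ∀ z x, x ∈ cell z ↔ (fun i => ⌊c * x i⌋) = z := fun z x => by
    simp only [cell, Set.mem_univ_pi, Set.mem_Ico, funext_iff, Int.floor_eq_iff, div_le_iff₀ hc,
      lt_div_iff₀ hc, mul_comm c]
  have vol_cell : ∀ z, volume (cell z) = ENNReal.ofReal c⁻¹ ^ Fintype.card ι := fun z => by
    have hlen : ∀ i, ((z i : ℝ) + 1) / c - z i / c = c⁻¹ := fun i => by field_simp; ring
    simp only [cell, Real.volume_pi_Ico, hlen, Finset.prod_const, Finset.card_univ]
  have hsum : (fun x : ι → ℝ => F (fun i => ⌊c * x i⌋)) =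
      fun x => ∑ z ∈ hF.toFinset, (cell z).indicator (fun _ => F z) x := funext fun x => by
    simp only [Set.indicator_apply, mem_cell, Finset.sum_ite_eq, Set.Finite.mem_toFinset,
      mem_support, ite_not]
    split_ifs with h
    exacts [h, rfl]
  have hint : ∀ z, Integrable ((cell z).indicator fun _ => F z) := fun z =>
    (integrable_indicator_iff (.univ_pi fun _ => measurableSet_Ico)).2
      (integrableOn_const (by rw [vol_cell]; exact ENNReal.pow_ne_top ENNReal.ofReal_ne_top))
  rw [hsum, integral_finsetSum _ fun z _ => hint z, finsum_eq_sum_of_support_subset F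
    (Set.Finite.coe_toFinset hF).symm.subset, Finset.mul_sum]
  refine Finset.sum_congr rfl fun z _ => ?_
  rw [integral_indicator_const _ (.univ_pi fun _ => measurableSet_Ico), measureReal_def, vol_cell,
    ENNReal.toReal_pow, ENNReal.toReal_ofReal (inv_nonneg.2 hc.le), smul_eq_mul]

section StagedHaar

variable {n : ℕ}

def AddedBefore (ε : Fin n → Bool) (i j : ℤ) (l : ℕ) : Prop :=
  i < j ∨ i = j ∧ ∀ d, ε d = true → (d : ℕ) < l

instance (ε : Fin n → Bool) (i j : ℤ) (l : ℕ) : Decidable (AddedBefore ε i j l) := by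
  unfold AddedBefore; infer_instance

theorem not_addedBefore_zero {ε : Fin n → Bool} (hε : ∃ d, ε d = true) {i j : ℤ} (h : j ≤ i) :
    ¬AddedBefore ε i j 0 := by
  obtain ⟨d, hd⟩ := hε
  rintro (h' | ⟨-, h'⟩)
  · omega
  · exact Nat.not_lt_zero _ (h' d hd)

theorem addedBefore_card_iff {ε : Fin n → Bool} (hε : ∃ d, ε d = true) (i j : ℤ) :
    AddedBefore ε i j n ↔ AddedBefore ε i (j + 1) 0 := by
  have h0 : AddedBefore ε i (j + 1) 0 ↔ i < j + 1 :=
    ⟨fun h => h.elim id fun h' => absurd (Or.inr h') (not_addedBefore_zero hε h'.1.ge),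
      Or.inl⟩
  rw [h0, AddedBefore]
  exact ⟨fun h => by rcases h with h | ⟨h, -⟩ <;> omega, fun h => by
    rcases lt_or_eq_of_le (Int.lt_add_one_iff.1 h) with h | h
    exacts [Or.inl h, Or.inr ⟨h, fun d _ => d.isLt⟩]⟩

theorem addedBefore_succ_iff {ε : Fin n → Bool} {i j : ℤ} {L : Fin n} :
    AddedBefore ε i j (L + 1) ↔
      AddedBefore ε i j L ∨ i = j ∧ ε L = true ∧ ∀ d, ε d = true → d ≤ L := by
  unfold AddedBefore
  constructor
  · rintro (h | ⟨rfl, h⟩)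
    · exact Or.inl (Or.inl h)
    · by_cases hL : ε L = true
      · exact Or.inr ⟨rfl, hL, fun d hd => Nat.lt_succ_iff.1 (h d hd)⟩
      · refine Or.inl (Or.inr ⟨rfl, fun d hd => ?_⟩)
        have hdL : d ≠ L := fun h => hL (h ▸ hd)
        have := h d hd
        omega
  · rintro ((h | ⟨rfl, h⟩) | ⟨rfl, -, h⟩)
    · exact Or.inl h
    · exact Or.inr ⟨rfl, fun d hd => (h d hd).trans (Nat.lt_succ_self _)⟩
    · exact Or.inr ⟨rfl, fun d hd => Nat.lt_succ_iff.2 (h d hd)⟩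

theorem latticeHaar_flipAt_of_addedBefore {ε : Fin n → Bool} {i j K : ℤ} {L : Fin n}
    (h : AddedBefore ε i j L) (hj : j ≤ K) (k z : Fin n → ℤ) :
    latticeHaar ε (K - i).toNat k (flipAt L (K - j).toNat z) = latticeHaar ε (K - i).toNat k z := by
  rcases h with h | ⟨rfl, h⟩
  · exact latticeHaar_flipAt_of_lt (by omega) ε k z L
  · exact latticeHaar_flipAt_of_false (Bool.eq_false_iff.2 fun hL => lt_irrefl _ (h L hL)) _ k z

def stagedHaar (K : ℤ) (ε : Fin n → Bool) (i : ℤ) (k : Fin n → ℤ) (j : ℤ) (l : ℕ)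
    (z : Fin n → ℤ) : ℝ :=
  if AddedBefore ε i j l then latticeHaar ε (K - i).toNat k z else 0

@[fun_prop]
theorem hasFiniteSupport_stagedHaar (K : ℤ) (ε : Fin n → Bool) (i : ℤ) (k : Fin n → ℤ) (j : ℤ)
    (l : ℕ) : HasFiniteSupport (stagedHaar K ε i k j l) := by
  unfold stagedHaar
  split_ifs
  exacts [hasFiniteSupport_latticeHaar ε _ k, hasFiniteSupport_zero]

variable {K : ℤ} {ε : Fin n → Bool} {i : ℤ} {k : Fin n → ℤ} {j : ℤ}

theorem stagedHaar_flipAt_add (hj : j ≤ K) (L : Fin n) (z : Fin n → ℤ) :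
    stagedHaar K ε i k j (L + 1) (flipAt L (K - j).toNat z) + stagedHaar K ε i k j (L + 1) z =
      2 * stagedHaar K ε i k j L z := by
  unfold stagedHaar
  by_cases hL : AddedBefore ε i j L
  · simp only [if_pos (addedBefore_succ_iff.2 (Or.inl hL)), if_pos hL,
      latticeHaar_flipAt_of_addedBefore hL hj]
    ring
  rw [if_neg hL, mul_zero]
  split_ifs with hL'
  · obtain ⟨rfl, hεL, -⟩ := (addedBefore_succ_iff.1 hL').resolve_left hL
    rw [latticeHaar_flipAt_of_true hεL, neg_add_cancel]
  · rw [add_zero]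

theorem stagedHaar_flipAt_eq_or (hj : j ≤ K) (L : Fin n) (z : Fin n → ℤ) :
    stagedHaar K ε i k j (L + 1) (flipAt L (K - j).toNat z) = stagedHaar K ε i k j (L + 1) z ∨
      ε L = true ∧ ∀ d, ε d = true → d ≤ L := by
  unfold stagedHaar
  split_ifs with hL'
  · rcases addedBefore_succ_iff.1 hL' with hL | ⟨-, hnew⟩
    exacts [Or.inl (latticeHaar_flipAt_of_addedBefore hL hj k z), Or.inr hnew]
  · exact Or.inl rfl

end StagedHaar

section StagedField

variable {m n : ℕ} (S : Finset (Fin n → Bool)) (J K : ℤ) (T : Finset (Fin n → ℤ))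
  (A : (Fin n → Bool) → ℤ → (Fin n → ℤ) → Matrix (Fin m) (Fin n) ℝ)

def stagedField (j : ℤ) (l : ℕ) (z : Fin n → ℤ) : Matrix (Fin m) (Fin n) ℝ :=
  ∑ ε ∈ S, ∑ i ∈ Finset.Icc J K, ∑ k ∈ T, stagedHaar K ε i k j l z • A ε i k

variable {S J K T A}

theorem stagedField_start (hS : ∀ ε ∈ S, ∃ d, ε d = true) {j : ℤ} (hj : j ≤ J)
    (z : Fin n → ℤ) : stagedField S J K T A j 0 z = 0 :=
  Finset.sum_eq_zero fun ε hε => Finset.sum_eq_zero fun i hi => Finset.sum_eq_zero fun k _ => by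
    rw [stagedHaar, if_neg (not_addedBefore_zero (hS ε hε) (hj.trans (Finset.mem_Icc.1 hi).1)),
      zero_smul]

theorem stagedField_card (hS : ∀ ε ∈ S, ∃ d, ε d = true) (j : ℤ) :
    stagedField S J K T A j n = stagedField S J K T A (j + 1) 0 :=
  funext fun z => Finset.sum_congr rfl fun ε hε => Finset.sum_congr rfl fun i _ =>
    Finset.sum_congr rfl fun k _ => by
      simp only [stagedHaar, if_congr (addedBefore_card_iff (hS ε hε) i j) rfl rfl]

theorem stagedField_end (z : Fin n → ℤ) :
    stagedField S J K T A (K + 1) 0 z =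
      ∑ ε ∈ S, ∑ i ∈ Finset.Icc J K, ∑ k ∈ T, latticeHaar ε (K - i).toNat k z • A ε i k :=
  Finset.sum_congr rfl fun ε _ => Finset.sum_congr rfl fun i hi =>
    Finset.sum_congr rfl fun k _ => by
      rw [stagedHaar, if_pos (show AddedBefore ε i (K + 1) 0 from
        Or.inl (Int.lt_add_one_iff.2 (Finset.mem_Icc.1 hi).2))]

theorem stagedField_flipAt_add {j : ℤ} (hj : j ≤ K) (L : Fin n) (z : Fin n → ℤ) :
    stagedField S J K T A j (L + 1) (flipAt L (K - j).toNat z) +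
      stagedField S J K T A j (L + 1) z = (2 : ℝ) • stagedField S J K T A j L z := by
  simp only [stagedField, ← Finset.sum_add_distrib, Finset.smul_sum, ← add_smul, smul_smul,
    stagedHaar_flipAt_add hj]

theorem stagedField_flipAt_sub_mem {W : Submodule ℝ (Matrix (Fin m) (Fin n) ℝ)} {L : Fin n}
    (hA : ∀ ε ∈ S, ε L = true → (∀ d, ε d = true → d ≤ L) → ∀ i k, A ε i k ∈ W)
    {j : ℤ} (hj : j ≤ K) (z : Fin n → ℤ) :
    stagedField S J K T A j (L + 1) (flipAt L (K - j).toNat z) -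
      stagedField S J K T A j (L + 1) z ∈ W := by
  simp only [stagedField, ← Finset.sum_sub_distrib, ← sub_smul]
  refine W.sum_mem fun ε hε => W.sum_mem fun i _ => W.sum_mem fun k _ => ?_
  rcases stagedHaar_flipAt_eq_or (i := i) (k := k) hj L z with h | ⟨hεL, hlast⟩
  · rw [h, sub_self, zero_smul]
    exact W.zero_mem
  · exact W.smul_mem _ (hA ε hε hεL hlast i k)

theorem hasFiniteSupport_stagedField (j : ℤ) (l : ℕ) :
    HasFiniteSupport (stagedField S J K T A j l) := by
  unfold stagedField
  fun_prop

variable {f : Matrix (Fin m) (Fin n) ℝ → ℝ} {W : Fin n → Submodule ℝ (Matrix (Fin m) (Fin n) ℝ)}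

theorem finsum_stagedField_le_succ (hf : IsRankOneConvex f) (hf0 : f 0 = 0)
    (hW : ∀ L, ∀ X ∈ W L, X.rank ≤ 1)
    (hA : ∀ ε ∈ S, ∀ L, ε L = true → (∀ d, ε d = true → d ≤ L) → ∀ i k, A ε i k ∈ W L)
    {j : ℤ} (hj : j ≤ K) (L : Fin n) :
    ∑ᶠ z, f (stagedField S J K T A j L z) ≤ ∑ᶠ z, f (stagedField S J K T A j (L + 1) z) :=
  hf.finsum_le_of_midpoint ((flipAt_involutive L (K - j).toNat).toPerm _)
    ((hasFiniteSupport_stagedField _ _).comp hf0) ((hasFiniteSupport_stagedField _ _).comp hf0)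
    (stagedField_flipAt_add hj L)
    fun z => hW L _ (stagedField_flipAt_sub_mem (fun ε hε hεL hlast => hA ε hε L hεL hlast) hj z)

theorem finsum_stagedField_zero_le (hf : IsRankOneConvex f) (hf0 : f 0 = 0)
    (hW : ∀ L, ∀ X ∈ W L, X.rank ≤ 1)
    (hA : ∀ ε ∈ S, ∀ L, ε L = true → (∀ d, ε d = true → d ≤ L) → ∀ i k, A ε i k ∈ W L)
    {j : ℤ} (hj : j ≤ K) {l : ℕ} (hl : l ≤ n) :
    ∑ᶠ z, f (stagedField S J K T A j 0 z) ≤ ∑ᶠ z, f (stagedField S J K T A j l z) := by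
  induction l with
  | zero => rfl
  | succ l ih =>
    exact (ih (by omega)).trans (finsum_stagedField_le_succ hf hf0 hW hA hj ⟨l, hl⟩)

theorem finsum_stagedField_nonneg (hf : IsRankOneConvex f) (hf0 : f 0 = 0)
    (hS : ∀ ε ∈ S, ∃ d, ε d = true) (hW : ∀ L, ∀ X ∈ W L, X.rank ≤ 1)
    (hA : ∀ ε ∈ S, ∀ L, ε L = true → (∀ d, ε d = true → d ≤ L) → ∀ i k, A ε i k ∈ W L)
    {j₀ j : ℤ} (hj₀ : j₀ ≤ J) (hj : j₀ ≤ j) (hjK : j ≤ K + 1) :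
    0 ≤ ∑ᶠ z, f (stagedField S J K T A j 0 z) := by
  induction j, hj using Int.leInduction with
  | base => simp [stagedField_start hS hj₀, hf0]
  | succ j _ ih =>
    rw [← stagedField_card hS]
    exact (ih (by omega)).trans (finsum_stagedField_zero_le hf hf0 hW hA (by omega) le_rfl)

end StagedField

theorem integral_comp_haarExpansion_nonneg {m n : ℕ} {f : Matrix (Fin m) (Fin n) ℝ → ℝ}
    (hf : IsRankOneConvex f) (hf0 : f 0 = 0) {S : Finset (Fin n → Bool)}
    (hS : ∀ ε ∈ S, ∃ d, ε d = true) (J K : ℤ) (T : Finset (Fin n → ℤ))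
    {A : (Fin n → Bool) → ℤ → (Fin n → ℤ) → Matrix (Fin m) (Fin n) ℝ}
    {W : Fin n → Submodule ℝ (Matrix (Fin m) (Fin n) ℝ)} (hW : ∀ L, ∀ X ∈ W L, X.rank ≤ 1)
    (hA : ∀ ε ∈ S, ∀ L, ε L = true → (∀ d, ε d = true → d ≤ L) → ∀ i k, A ε i k ∈ W L) :
    0 ≤ ∫ x : Fin n → ℝ,
      f (∑ ε ∈ S, ∑ i ∈ Finset.Icc J K, ∑ k ∈ T, haarND n ε i k x • A ε i k) := by
  have hfield : ∀ x : Fin n → ℝ,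
      ∑ ε ∈ S, ∑ i ∈ Finset.Icc J K, ∑ k ∈ T, haarND n ε i k x • A ε i k =
        stagedField S J K T A (K + 1) 0 fun l => ⌊(2 : ℝ) ^ (K + 1) * x l⌋ := fun x => by
    rw [stagedField_end]
    refine Finset.sum_congr rfl fun ε _ => Finset.sum_congr rfl fun i hi => ?_
    simp only [haarND_eq_latticeHaar ε (Finset.mem_Icc.1 hi).2]
  simp only [hfield]
  rw [integral_comp_floor_mul (F := fun z => f (stagedField S J K T A (K + 1) 0 z))
    (zpow_pos two_pos _) ((hasFiniteSupport_stagedField _ _).comp hf0)]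
  exact mul_nonneg (by positivity) (finsum_stagedField_nonneg hf hf0 hS hW hA
    (min_le_left J (K + 1)) (min_le_right _ _) le_rfl)

def rowSubmodule (m n : ℕ) (r : Fin m) : Submodule ℝ (Matrix (Fin m) (Fin n) ℝ) where
  carrier := {X | ∀ i, i ≠ r → ∀ q, X i q = 0}
  add_mem' hX hY i hi q := by simp [hX i hi q, hY i hi q]
  zero_mem' _ _ _ := rfl
  smul_mem' c X hX i hi q := by simp [hX i hi q]

theorem rank_le_one_of_mem_rowSubmodule {m n : ℕ} {r : Fin m} {X : Matrix (Fin m) (Fin n) ℝ}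
    (hX : X ∈ rowSubmodule m n r) : X.rank ≤ 1 := by
  have hX' : X = Matrix.vecMulVec (Pi.single r 1) (X r) := by
    ext i q
    by_cases hi : i = r
    · subst hi; simp [Matrix.vecMulVec_apply]
    · simp [Matrix.vecMulVec_apply, hi, hX i hi q]
  rw [hX']
  exact Matrix.rank_vecMulVec_le _ _

theorem finsum_mul_eq_sum_piFinset_Icc {ι : Type*} [Fintype ι] [DecidableEq ι] {R : ℕ}
    {c : (ι → ℤ) → ℝ} (hc : ∀ k, (∃ l, R < (k l).natAbs) → c k = 0) (g : (ι → ℤ) → ℝ) :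
    ∑ᶠ k, c k * g k = ∑ k ∈ Fintype.piFinset fun _ => Finset.Icc (-(R : ℤ)) R, c k * g k := by
  refine finsum_eq_sum_of_support_subset _ fun k hk => ?_
  rw [Finset.mem_coe, Fintype.mem_piFinset]
  by_contra! ⟨l, hl⟩
  rw [Finset.mem_Icc] at hl
  exact hk (by simp only [hc k ⟨l, by omega⟩, zero_mul])

section DiagonalHaarField

variable {n : ℕ}

def diagMatrix (n : ℕ) (u : Fin n → ℝ) (v : ℝ) : Matrix (Fin 2) (Fin n) ℝ :=
  Matrix.of fun p q =>
    if p = 0 then (if (q : ℕ) + 1 < n then u q else 0) else (if (q : ℕ) + 1 = n then v else 0)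

@[simp]
theorem diagMatrix_zero_apply (u : Fin n → ℝ) (v : ℝ) (q : Fin n) :
    diagMatrix n u v 0 q = if (q : ℕ) + 1 < n then u q else 0 := rfl

@[simp]
theorem diagMatrix_one_apply (u : Fin n → ℝ) (v : ℝ) (q : Fin n) :
    diagMatrix n u v 1 q = if (q : ℕ) + 1 = n then v else 0 := rfl

def lastHaarType (n : ℕ) : Fin n → Bool := fun l => decide ((l : ℕ) + 1 = n)

def firstRowHaarTypes (n : ℕ) : Finset (Fin n → Bool) :=
  Finset.univ.filter fun ε => (∃ l, ε l = true) ∧ ∀ l : Fin n, (l : ℕ) + 1 = n → ε l = false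

theorem lastHaarType_not_mem_firstRowHaarTypes (hn : 0 < n) :
    lastHaarType n ∉ firstRowHaarTypes n := fun h =>
  absurd ((Finset.mem_filter.1 h).2.2 ⟨n - 1, by omega⟩ (by simp; omega))
    (by simp [lastHaarType]; omega)

theorem exists_eq_true_of_mem_insert_lastHaarType (hn : 0 < n) :
    ∀ ε ∈ insert (lastHaarType n) (firstRowHaarTypes n), ∃ d, ε d = true := by
  simp only [Finset.forall_mem_insert]
  exact ⟨⟨⟨n - 1, by omega⟩, by simp [lastHaarType]; omega⟩,
    fun ε hε => (Finset.mem_filter.1 hε).2.1⟩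

def diagHaarCoeff (a : (Fin n → Bool) → ℤ → (Fin n → ℤ) → Fin n → ℝ) (b : ℤ → (Fin n → ℤ) → ℝ)
    (ε : Fin n → Bool) (j : ℤ) (k : Fin n → ℤ) : Matrix (Fin 2) (Fin n) ℝ :=
  if ε = lastHaarType n then diagMatrix n 0 (b j k) else diagMatrix n (a ε j k) 0

theorem diagHaarCoeff_mem_rowSubmodule (a : (Fin n → Bool) → ℤ → (Fin n → ℤ) → Fin n → ℝ)
    (b : ℤ → (Fin n → ℤ) → ℝ) :
    ∀ ε ∈ insert (lastHaarType n) (firstRowHaarTypes n), ∀ L, ε L = true → ∀ j k,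
      diagHaarCoeff a b ε j k ∈ rowSubmodule 2 n (if (L : ℕ) + 1 = n then 1 else 0) := by
  simp only [Finset.forall_mem_insert]
  constructor
  · intro L hL j k
    simp only [lastHaarType, decide_eq_true_eq] at hL
    rw [diagHaarCoeff, if_pos rfl, if_pos hL]
    intro i hi q
    simp [show i = 0 by omega]
  · intro ε hε L hL j k
    have hε' := (Finset.mem_filter.1 hε).2.2
    have hLn : ¬(L : ℕ) + 1 = n := fun h => by simp [hε' L h] at hL
    have hne : ε ≠ lastHaarType n := fun h => hLn (by simpa [h, lastHaarType] using hL)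
    rw [diagHaarCoeff, if_neg hne, if_neg hLn]
    intro i hi q
    simp [show i = 1 by omega]

theorem diagMatrix_eq_sum_haarND (hn : 0 < n) {J K : ℤ}
    {a : (Fin n → Bool) → ℤ → (Fin n → ℤ) → Fin n → ℝ} {b : ℤ → (Fin n → ℤ) → ℝ} {R : ℕ}
    (haR : ∀ ε j k i, (∃ l, R < (k l).natAbs) → a ε j k i = 0)
    (hbR : ∀ j k, (∃ l, R < (k l).natAbs) → b j k = 0)
    {u : Fin n → (Fin n → ℝ) → ℝ}
    (hu : ∀ i : Fin n, (i : ℕ) + 1 < n → ∀ x, u i x =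
      ∑ ε ∈ firstRowHaarTypes n, ∑ j ∈ Finset.Icc J K,
        ∑ᶠ k : Fin n → ℤ, a ε j k i * haarND n ε j k x)
    {v : (Fin n → ℝ) → ℝ}
    (hv : ∀ x, v x = ∑ j ∈ Finset.Icc J K,
      ∑ᶠ k : Fin n → ℤ, b j k * haarND n (lastHaarType n) j k x) (x : Fin n → ℝ) :
    diagMatrix n (fun q => u q x) (v x) =
      ∑ ε ∈ insert (lastHaarType n) (firstRowHaarTypes n), ∑ j ∈ Finset.Icc J K,
        ∑ k ∈ Fintype.piFinset fun _ => Finset.Icc (-(R : ℤ)) R,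
          haarND n ε j k x • diagHaarCoeff a b ε j k := by
  have hN : diagHaarCoeff a b (lastHaarType n) = fun j k => diagMatrix n 0 (b j k) := by
    ext j k : 2
    exact if_pos rfl
  have hE : ∀ ε ∈ firstRowHaarTypes n,
      diagHaarCoeff a b ε = fun j k => diagMatrix n (a ε j k) 0 := fun ε hε => by
    ext j k : 2
    exact if_neg fun h : ε = lastHaarType n => lastHaarType_not_mem_firstRowHaarTypes hn (h ▸ hε)
  rw [Finset.sum_insert (lastHaarType_not_mem_firstRowHaarTypes hn), hN,
    Finset.sum_congr (s₂ := firstRowHaarTypes n) rfl fun ε hε => by rw [hE ε hε]]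
  ext p q
  fin_cases p
  · simp only [Fin.zero_eta, Matrix.add_apply, Matrix.sum_apply, Matrix.smul_apply, smul_eq_mul,
      diagMatrix_zero_apply, Pi.zero_apply, ite_self, mul_zero, Finset.sum_const_zero, zero_add]
    split_ifs with hq
    · simp only [hu q hq x, finsum_mul_eq_sum_piFinset_Icc (haR _ _ · q), mul_comm]
    · simp
  · simp only [Fin.mk_one, Matrix.add_apply, Matrix.sum_apply, Matrix.smul_apply, smul_eq_mul,
      diagMatrix_one_apply, ite_self, mul_zero, Finset.sum_const_zero, add_zero]
    split_ifs with hq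
    · simp only [hv x, finsum_mul_eq_sum_piFinset_Icc (hbR _), mul_comm]
    · simp

end DiagonalHaarField

/-- Jensen-type inequality for rank-one convex `f` with `f(0)=0` applied to matrix fields
built from finite Haar expansions: the first-row entries `u_i` (`i ≤ n−1`) are combinations
of Haar functions `h^{(ε)}_{j,k}` with `ε ≠ 0`, `ε_n = 0`, and the `(2,n)` entry `v_n` is a
combination of Haar functions with `ε = e_n`; all coefficients vanish for `|k|` large. -/
theorem jensen_for_haar_expansions (n : ℕ) (hn : 2 ≤ n)
    (f : Matrix (Fin 2) (Fin n) ℝ → ℝ) (hf : IsRankOneConvex f) (hf0 : f 0 = 0)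
    (J K : ℤ)
    (a : (Fin n → Bool) → ℤ → (Fin n → ℤ) → Fin n → ℝ)
    (b : ℤ → (Fin n → ℤ) → ℝ)
    (R : ℕ)
    (haR : ∀ ε j k i, (∃ l, R < (k l).natAbs) → a ε j k i = 0)
    (hbR : ∀ j k, (∃ l, R < (k l).natAbs) → b j k = 0)
    (u : Fin n → (Fin n → ℝ) → ℝ)
    (hu : ∀ i : Fin n, (i : ℕ) + 1 < n → ∀ x, u i x =
      ∑ ε ∈ Finset.univ.filter (fun ε : Fin n → Bool =>
          (∃ l, ε l = true) ∧ ∀ l : Fin n, (l : ℕ) + 1 = n → ε l = false),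
        ∑ j ∈ Finset.Icc J K, ∑ᶠ k : Fin n → ℤ, a ε j k i * haarND n ε j k x)
    (v : (Fin n → ℝ) → ℝ)
    (hv : ∀ x, v x = ∑ j ∈ Finset.Icc J K,
      ∑ᶠ k : Fin n → ℤ, b j k * haarND n (fun l => decide ((l : ℕ) + 1 = n)) j k x) :
    0 ≤ ∫ x : Fin n → ℝ, f (Matrix.of fun p q =>
      if p = 0 then (if (q : ℕ) + 1 < n then u q x else 0)
      else (if (q : ℕ) + 1 = n then v x else 0)) := by
  have hn0 : 0 < n := by omega
  show 0 ≤ ∫ x, f (diagMatrix n (fun q => u q x) (v x))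
  simp only [diagMatrix_eq_sum_haarND hn0 haR hbR hu hv]
  exact integral_comp_haarExpansion_nonneg hf hf0 (exists_eq_true_of_mem_insert_lastHaarType hn0)
    J K _ (fun L _ => rank_le_one_of_mem_rowSubmodule)
    fun ε hε L hL _ => diagHaarCoeff_mem_rowSubmodule a b ε hε L hL
end
end

section
/- Let Ω ⊆ ℝ² be a nonempty bounded open set, let A ∈ ℝ^{2×2} with A₁₂ > 0, and let φ ∈ C_c^∞(Ω, ℝ²) be such that (A + Dφ(x))₁₂ > 0 for all x ∈ Ω. Set ψ(x) = Ax + φ(x) (extended by ψ(x) = Ax outside Ω) and T₁(x) = (x₁, ψ₁(x)). Then T₁ is injective on Ω, T₁(Ω) is a bounded open set, and the Lebesgue measure of T₁(Ω) equals A₁₂ · |Ω|, where |Ω| is the Lebesgue measure of Ω. -/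
open MeasureTheory

noncomputable section

/-!
Along every vertical line `x₁ = c` the map `T₁ = (x₁, ψ₁)` is strictly increasing in `x₂`,
because `∂₂ψ₁ = A₁₂ + ∂₂φ₁` is positive on `Ω` by assumption and equals `A₁₂ > 0` off the support
of `φ`; hence `T₁` is injective. Its Jacobian determinant is `∂₂ψ₁ ≠ 0`, so `T₁` is an open map by
the inverse function theorem, and the change of variables formula gives
`|T₁(Ω)| = ∫_Ω ∂₂ψ₁ = A₁₂ |Ω| + ∫_Ω ∂₂φ₁`, where the last integral vanishes because `φ` has compact
support in `Ω`.
-/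

open Set Function ContinuousLinearMap
open scoped Matrix

section IntegralDerivative

variable {E G : Type*} [NormedAddCommGroup E] [NormedSpace ℝ E]
  [MeasurableSpace E] [BorelSpace E] {μ : Measure E} [μ.IsAddHaarMeasure]
  [NormedAddCommGroup G] [NormedSpace ℝ G]

theorem integral_fderiv_apply_eq_zero [FiniteDimensional ℝ E] {g : E → G} {v : E}
    (hg : Differentiable ℝ g) (hgi : Integrable g μ)
    (hg'i : Integrable (fun x => fderiv ℝ g x v) μ) :
    ∫ x, fderiv ℝ g x v ∂μ = 0 := by
  simpa using integral_smul_fderiv_eq_neg_fderiv_smul_of_integrable (μ := μ)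
    (f := fun _ => (1 : ℝ)) (by simp) (by simpa using hg'i) (by simpa using hgi)
    (fun _ _ => differentiableAt_const _) (fun x _ => hg x)

theorem HasCompactSupport.integrable_fderiv_apply {g : E → G} (hc : HasCompactSupport g)
    (hg : ContDiff ℝ 1 g) (v : E) : Integrable (fun x => fderiv ℝ g x v) μ :=
  ((hg.continuous_fderiv one_ne_zero).clm_apply continuous_const).integrable_of_hasCompactSupport
    (hc.fderiv_apply ℝ v)

theorem HasCompactSupport.setIntegral_fderiv_apply_eq_zero [FiniteDimensional ℝ E] {g : E → G}
    {s : Set E} (hc : HasCompactSupport g) (hg : ContDiff ℝ 1 g) (hs : tsupport g ⊆ s) (v : E) :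
    ∫ x in s, fderiv ℝ g x v ∂μ = 0 := by
  rw [setIntegral_eq_integral_of_forall_compl_eq_zero fun x hx => by
    rw [fderiv_of_notMem_tsupport ℝ fun h => hx (hs h), zero_apply]]
  exact integral_fderiv_apply_eq_zero (hg.differentiable one_ne_zero)
    (hg.continuous.integrable_of_hasCompactSupport hc) (hc.integrable_fderiv_apply hg v)

end IntegralDerivative

section Jacobian

variable {m n : ℕ}

theorem jacobianM_apply {φ : (Fin n → ℝ) → (Fin m → ℝ)} {x : Fin n → ℝ}
    (hφ : DifferentiableAt ℝ φ x) (i : Fin m) (j : Fin n) :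
    jacobianM m n φ x i j = fderiv ℝ (fun y => φ y i) x (Pi.single j 1) := by
  have h := ((hasFDerivAt_apply i _).comp x hφ.hasFDerivAt).fderiv
  rw [show (fun y => φ y i) = (fun f => f i) ∘ φ from rfl, h]
  rfl

theorem jacobianM_mulVec_add (A : Matrix (Fin m) (Fin n) ℝ) {φ : (Fin n → ℝ) → (Fin m → ℝ)}
    {x : Fin n → ℝ} (hφ : DifferentiableAt ℝ φ x) :
    jacobianM m n (fun y => A *ᵥ y + φ y) x = A + jacobianM m n φ x := by
  have hA : HasFDerivAt (A *ᵥ ·) (LinearMap.toContinuousLinearMap A.mulVecLin) x :=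
    (LinearMap.toContinuousLinearMap A.mulVecLin).hasFDerivAt
  have hderiv : HasFDerivAt (fun y => A *ᵥ y + φ y) _ x := hA.add hφ.hasFDerivAt
  ext i j
  simp [jacobianM, hderiv.fderiv]

theorem fderiv_mulVec_add_apply (A : Matrix (Fin m) (Fin n) ℝ) {φ : (Fin n → ℝ) → (Fin m → ℝ)}
    {x : Fin n → ℝ} (hφ : DifferentiableAt ℝ φ x) (i : Fin m) (j : Fin n) :
    fderiv ℝ (fun y => (A *ᵥ y + φ y) i) x (Pi.single j 1) = A i j + jacobianM m n φ x i j := by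
  have hψ : DifferentiableAt ℝ (fun y => A *ᵥ y + φ y) x :=
    ((LinearMap.toContinuousLinearMap A.mulVecLin).differentiableAt).add hφ
  rw [← jacobianM_apply hψ, jacobianM_mulVec_add A hφ, Matrix.add_apply]

theorem jacobianM_eq_zero_of_notMem_tsupport {φ : (Fin n → ℝ) → (Fin m → ℝ)} {x : Fin n → ℝ}
    (hx : x ∉ tsupport φ) : jacobianM m n φ x = 0 := by
  ext i j
  simp [jacobianM, fderiv_of_notMem_tsupport ℝ hx]

theorem HasCompactSupport.integrable_jacobianM_apply {φ : (Fin n → ℝ) → (Fin m → ℝ)}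
    (hc : HasCompactSupport φ) (hφ : ContDiff ℝ 1 φ) (i : Fin m) (j : Fin n) :
    Integrable fun x => jacobianM m n φ x i j := by
  simp_rw [jacobianM_apply (hφ.differentiable one_ne_zero _)]
  exact (hc.comp_left rfl).integrable_fderiv_apply ((contDiff_apply ℝ ℝ i).comp hφ) _

theorem HasCompactSupport.setIntegral_jacobianM_apply_eq_zero {φ : (Fin n → ℝ) → (Fin m → ℝ)}
    {s : Set (Fin n → ℝ)} (hc : HasCompactSupport φ) (hφ : ContDiff ℝ 1 φ) (hs : tsupport φ ⊆ s)
    (i : Fin m) (j : Fin n) : ∫ x in s, jacobianM m n φ x i j = 0 := by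
  simp_rw [jacobianM_apply (hφ.differentiable one_ne_zero _)]
  exact (hc.comp_left rfl).setIntegral_fderiv_apply_eq_zero ((contDiff_apply ℝ ℝ i).comp hφ)
    ((tsupport_comp_subset rfl φ).trans hs) _

theorem HasCompactSupport.setLIntegral_ofReal_const_add_jacobianM_apply
    {φ : (Fin n → ℝ) → (Fin m → ℝ)} {s : Set (Fin n → ℝ)} (hc : HasCompactSupport φ)
    (hφ : ContDiff ℝ 1 φ) (hs : tsupport φ ⊆ s) (hfin : volume s ≠ ⊤) {c : ℝ} {i : Fin m}
    {j : Fin n} (hnonneg : ∀ x, 0 ≤ c + jacobianM m n φ x i j) :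
    ∫⁻ x in s, ENNReal.ofReal (c + jacobianM m n φ x i j) = ENNReal.ofReal c * volume s := by
  have hcint : IntegrableOn (fun _ => c) s := integrableOn_const hfin
  have hJint : IntegrableOn (fun x => jacobianM m n φ x i j) s :=
    (hc.integrable_jacobianM_apply hφ i j).integrableOn
  have hint : IntegrableOn (fun x => c + jacobianM m n φ x i j) s := hcint.add hJint
  rw [← ofReal_integral_eq_lintegral_ofReal hint (ae_of_all _ hnonneg),
    integral_add hcint hJint, hc.setIntegral_jacobianM_apply_eq_zero hφ hs, add_zero,
    setIntegral_const, smul_eq_mul, measureReal_def, mul_comm,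
    ENNReal.ofReal_mul' ENNReal.toReal_nonneg, ENNReal.ofReal_toReal hfin]

end Jacobian

def fiberMap (f : (Fin 2 → ℝ) → ℝ) (x : Fin 2 → ℝ) : Fin 2 → ℝ := ![x 0, f x]

section FiberMap

variable {f : (Fin 2 → ℝ) → ℝ}

theorem strictMono_slice_of_fderiv_pos (hf : Differentiable ℝ f)
    (hpos : ∀ x, 0 < fderiv ℝ f x (Pi.single 1 1)) (c : ℝ) : StrictMono fun t => f ![c, t] := by
  have hline (t : ℝ) : HasDerivAt (fun t : ℝ => ![c, t]) (Pi.single 1 1) t := by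
    refine hasDerivAt_pi.2 fun i => ?_
    fin_cases i
    · simpa using hasDerivAt_const t c
    · simpa using hasDerivAt_id' t
  refine strictMono_of_deriv_pos fun t => ?_
  have h : HasDerivAt (fun t => f ![c, t]) (fderiv ℝ f ![c, t] (Pi.single 1 1)) t :=
    (hf _).hasFDerivAt.comp_hasDerivAt t (hline t)
  exact h.deriv ▸ hpos _

theorem fiberMap_injective (hf : ∀ c, StrictMono fun t => f ![c, t]) :
    Injective (fiberMap f) := by
  intro a b hab
  have ha : ![a 0, a 1] = a := FinVec.etaExpand_eq a
  have hb : ![b 0, b 1] = b := FinVec.etaExpand_eq b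
  have h0 : a 0 = b 0 := congrFun hab 0
  have h1 : a 1 = b 1 := (hf (a 0)).injective <| by
    rw [ha, h0, hb]
    exact congrFun hab 1
  rw [← ha, ← hb, h0, h1]

theorem continuous_fiberMap (hf : Continuous f) : Continuous (fiberMap f) :=
  continuous_pi fun i => by fin_cases i; exacts [continuous_apply 0, hf]

theorem HasFDerivAt.fiberMap {f' : (Fin 2 → ℝ) →L[ℝ] ℝ} {x : Fin 2 → ℝ}
    (hf : HasFDerivAt f f' x) : HasFDerivAt (fiberMap f) (pi ![proj 0, f']) x := by
  refine hasFDerivAt_pi'.2 fun i => ?_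
  fin_cases i
  · exact hasFDerivAt_apply 0 x
  · exact hf

theorem HasStrictFDerivAt.fiberMap {f' : (Fin 2 → ℝ) →L[ℝ] ℝ} {x : Fin 2 → ℝ}
    (hf : HasStrictFDerivAt f f' x) : HasStrictFDerivAt (fiberMap f) (pi ![proj 0, f']) x := by
  refine hasStrictFDerivAt_pi'.2 fun i => ?_
  fin_cases i
  · exact hasStrictFDerivAt_apply 0 x
  · exact hf

theorem det_pi_proj_zero (f' : (Fin 2 → ℝ) →L[ℝ] ℝ) :
    (pi ![proj 0, f']).det = f' (Pi.single 1 1) := by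
  rw [ContinuousLinearMap.det, ← LinearMap.det_toMatrix', Matrix.det_fin_two]
  simp [LinearMap.toMatrix'_apply]

theorem isOpenMap_fiberMap (hf : ContDiff ℝ 1 f)
    (hne : ∀ x, fderiv ℝ f x (Pi.single 1 1) ≠ 0) : IsOpenMap (fiberMap f) := by
  have hdet (x) : (pi ![proj 0, fderiv ℝ f x]).det ≠ 0 := by rw [det_pi_proj_zero]; exact hne x
  refine isOpenMap_of_hasStrictFDerivAt_equiv
    (f' := fun x => (pi ![proj 0, fderiv ℝ f x]).toContinuousLinearEquivOfDetNeZero (hdet x))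
    fun x => ?_
  simpa using (hf.contDiffAt.hasStrictFDerivAt one_ne_zero).fiberMap

theorem volume_fiberMap_image (hf : Differentiable ℝ f) {s : Set (Fin 2 → ℝ)}
    (hs : MeasurableSet s) (hinj : InjOn (fiberMap f) s) :
    volume (fiberMap f '' s) = ∫⁻ x in s, ENNReal.ofReal |fderiv ℝ f x (Pi.single 1 1)| := by
  rw [← lintegral_abs_det_fderiv_eq_addHaar_image volume hs
    (fun x _ => (hf x).hasFDerivAt.fiberMap.hasFDerivWithinAt) hinj]
  simp_rw [det_pi_proj_zero]

end FiberMap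

theorem partial_legendre_change_of_variables_general
    (Ω : Set (Fin 2 → ℝ)) (hΩo : IsOpen Ω)
    (hΩb : Bornology.IsBounded Ω)
    (A : Matrix (Fin 2) (Fin 2) ℝ) (hA : 0 < A 0 1)
    (φ : (Fin 2 → ℝ) → (Fin 2 → ℝ)) (hφ : ContDiff ℝ (⊤ : ℕ∞) φ)
    (hφc : HasCompactSupport φ) (hφΩ : tsupport φ ⊆ Ω)
    (hpos : ∀ x ∈ Ω, 0 < (A + jacobianM 2 2 φ x) 0 1)
    (ψ : (Fin 2 → ℝ) → (Fin 2 → ℝ)) (hψ : ∀ x, ψ x = A.mulVec x + φ x)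
    (T₁ : (Fin 2 → ℝ) → (Fin 2 → ℝ)) (hT₁ : ∀ x, T₁ x = ![x 0, ψ x 0]) :
    Set.InjOn T₁ Ω ∧ IsOpen (T₁ '' Ω) ∧ Bornology.IsBounded (T₁ '' Ω) ∧
      volume (T₁ '' Ω) = ENNReal.ofReal (A 0 1) * volume Ω := by
  obtain rfl : ψ = fun x => A *ᵥ x + φ x := funext hψ
  obtain rfl : T₁ = fiberMap fun x => (A *ᵥ x + φ x) 0 := funext hT₁
  have hφ₁ : ContDiff ℝ 1 φ := hφ.of_le (by simp)
  have hψ₁ : ContDiff ℝ 1 fun x => (A *ᵥ x + φ x) 0 := (contDiff_apply ℝ ℝ 0).comp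
    ((LinearMap.toContinuousLinearMap A.mulVecLin).contDiff.add hφ₁)
  have hpartial (x) : fderiv ℝ (fun x => (A *ᵥ x + φ x) 0) x (Pi.single 1 1) =
      A 0 1 + jacobianM 2 2 φ x 0 1 :=
    fderiv_mulVec_add_apply A (hφ₁.differentiable one_ne_zero x) 0 1
  have hpartial_pos (x) : 0 < A 0 1 + jacobianM 2 2 φ x 0 1 := by
    by_cases hx : x ∈ Ω
    · exact hpos x hx
    · simpa [jacobianM_eq_zero_of_notMem_tsupport fun h => hx (hφΩ h)] using hA
  have hinj := fiberMap_injective <| strictMono_slice_of_fderiv_pos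
    (hψ₁.differentiable one_ne_zero) fun x => hpartial x ▸ hpartial_pos x
  refine ⟨hinj.injOn,
    isOpenMap_fiberMap hψ₁ (fun x => hpartial x ▸ (hpartial_pos x).ne') Ω hΩo, ?_, ?_⟩
  · exact (hΩb.isCompact_closure.image (continuous_fiberMap hψ₁.continuous)).isBounded.subset
      (image_mono subset_closure)
  · rw [volume_fiberMap_image (hψ₁.differentiable one_ne_zero) hΩo.measurableSet hinj.injOn,
      ← hφc.setLIntegral_ofReal_const_add_jacobianM_apply hφ₁ hφΩ hΩb.measure_lt_top.ne
        fun x => (hpartial_pos x).le]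
    simp_rw [hpartial, abs_of_pos (hpartial_pos _)]

/-- For `ψ(x) = Ax + φ(x)` with `A₁₂ > 0` and `(A + Dφ)₁₂ > 0` on `Ω`, the map
`T₁(x) = (x₁, ψ₁(x))` is injective on `Ω`, `T₁(Ω)` is bounded and open, and
`|T₁(Ω)| = A₁₂·|Ω|`. -/
theorem partial_legendre_change_of_variables
    (Ω : Set (Fin 2 → ℝ)) (hΩo : IsOpen Ω) (hΩne : Ω.Nonempty)
    (hΩb : Bornology.IsBounded Ω)
    (A : Matrix (Fin 2) (Fin 2) ℝ) (hA : 0 < A 0 1)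
    (φ : (Fin 2 → ℝ) → (Fin 2 → ℝ)) (hφ : ContDiff ℝ (⊤ : ℕ∞) φ)
    (hφc : HasCompactSupport φ) (hφΩ : tsupport φ ⊆ Ω)
    (hpos : ∀ x ∈ Ω, 0 < (A + jacobianM 2 2 φ x) 0 1)
    (ψ : (Fin 2 → ℝ) → (Fin 2 → ℝ)) (hψ : ∀ x, ψ x = A.mulVec x + φ x)
    (T₁ : (Fin 2 → ℝ) → (Fin 2 → ℝ)) (hT₁ : ∀ x, T₁ x = ![x 0, ψ x 0]) :
    Set.InjOn T₁ Ω ∧ IsOpen (T₁ '' Ω) ∧ Bornology.IsBounded (T₁ '' Ω) ∧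
      volume (T₁ '' Ω) = ENNReal.ofReal (A 0 1) * volume Ω :=
  partial_legendre_change_of_variables_general Ω hΩo hΩb A hA φ hφ hφc hφΩ hpos ψ hψ T₁ hT₁

end
end
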